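/- The language L = {a^n b^m : m ≥ n} over alphabet {a,b} is not recognised by any deterministic VASS with reachability acceptance (in any dimension k). -/

import Mathlib

open scoped Classical

/-- A `k`-dimensional vector addition system with states over alphabet `A`.
States are `Fin n`; transitions are labelled by a letter and an effect in `ℤ^k`. -/
structure VASS (k : ℕ) (A : Type) where
  n : ℕ
  trans : Set (Fin n × A × (Fin k → ℤ) × Fin n)
  init : Fin n
  acc : Set (Fin n)

namespace VASS

variable {k : ℕ} {A : Type}

/-- A configuration: a state together with counters in `ℕ^k`. -/
abbrev Conf (V : VASS k A) := Fin V.n × (Fin k → ℕ)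

/-- `Run V c w c'`: there is a valid run of `V` from configuration `c` to `c'`
reading the word `w`, with counters staying nonnegative throughout. -/
inductive Run (V : VASS k A) : V.Conf → List A → V.Conf → Prop
  | nil (c : V.Conf) : Run V c [] c
  | cons {q : Fin V.n} {v : Fin k → ℕ} {a : A} {d : Fin k → ℤ} {q' : Fin V.n}
      {w : List A} {c' : V.Conf} :
      (q, a, d, q') ∈ V.trans →
      (∀ i, 0 ≤ (v i : ℤ) + d i) →
      Run V (q', fun i => ((v i : ℤ) + d i).toNat) w c' →
      Run V (q, v) (a :: w) c'

/-- The initial configuration: initial state with all counters zero. -/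
def initConf (V : VASS k A) : V.Conf := (V.init, fun _ => 0)

/-- Coverability acceptance: some run ends in an accepting state. -/
def LangCover (V : VASS k A) : Set (List A) :=
  {w | ∃ c, V.Run V.initConf w c ∧ c.1 ∈ V.acc}

/-- Reachability acceptance: some run ends in an accepting state with all counters zero. -/
def LangReach (V : VASS k A) : Set (List A) :=
  {w | ∃ c, V.Run V.initConf w c ∧ c.1 ∈ V.acc ∧ c.2 = fun _ => 0}

/-- Deterministic: at most one outgoing transition per state and letter. -/
def Det (V : VASS k A) : Prop :=
  ∀ q a d₁ q₁ d₂ q₂, (q, a, d₁, q₁) ∈ V.trans → (q, a, d₂, q₂) ∈ V.trans →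
    d₁ = d₂ ∧ q₁ = q₂

/-- A resolver: given the history (the word read so far) and the next letter,
choose the effect and target state of the transition to take. -/
def Resolver (V : VASS k A) := List A → A → (Fin k → ℤ) × Fin V.n

/-- One step of the run built by a resolver (carrying the prefix read so far). -/
noncomputable def resStep (V : VASS k A) (r : V.Resolver) :
    (List A × Option V.Conf) → A → (List A × Option V.Conf) :=
  fun p a =>
    (p.1 ++ [a],
      p.2.bind fun c =>
        let t := r p.1 a
        if (c.1, a, t.1, t.2) ∈ V.trans ∧ ∀ i, 0 ≤ ((c.2 i : ℤ) + t.1 i) then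
          some (t.2, fun i => ((c.2 i : ℤ) + t.1 i).toNat)
        else none)

/-- The configuration reached by following the resolver on `w` (if the run survives). -/
noncomputable def resRun (V : VASS k A) (r : V.Resolver) (w : List A) : Option V.Conf :=
  (w.foldl (V.resStep r) ([], some V.initConf)).2

/-- History-determinism for coverability acceptance:
some resolver's run accepts every word of the language. -/
def HDCover (V : VASS k A) : Prop :=
  ∃ r : V.Resolver, ∀ w ∈ V.LangCover,
    ∃ c, V.resRun r w = some c ∧ c.1 ∈ V.acc

/-- History-determinism for reachability acceptance. -/
def HDReach (V : VASS k A) : Prop :=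
  ∃ r : V.Resolver, ∀ w ∈ V.LangReach,
    ∃ c, V.resRun r w = some c ∧ c.1 ∈ V.acc ∧ c.2 = fun _ => 0

/-- Coverability language of a VASS with ε-transitions (letter `none` is silent):
the input word is the sequence of actual letters read. -/
def LangCoverE (V : VASS k (Option A)) : Set (List A) :=
  {w | ∃ u c, V.Run V.initConf u c ∧ u.reduceOption = w ∧ c.1 ∈ V.acc}

/-- Reachability language of a VASS with ε-transitions. -/
def LangReachE (V : VASS k (Option A)) : Set (List A) :=
  {w | ∃ u c, V.Run V.initConf u c ∧ u.reduceOption = w ∧ c.1 ∈ V.acc ∧ c.2 = fun _ => 0}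

/-- History-determinism with ε-transitions, coverability: a resolver together with a
(prefix-monotone) scheduling of silent moves accepts every word of the language. -/
def HDCoverE (V : VASS k (Option A)) : Prop :=
  ∃ (r : V.Resolver) (f : List A → List (Option A)),
    (∀ u w, u <+: w → f u <+: f w) ∧
    ∀ w ∈ V.LangCoverE, (f w).reduceOption = w ∧
      ∃ c, V.resRun r (f w) = some c ∧ c.1 ∈ V.acc

/-- History-determinism with ε-transitions, reachability. -/
def HDReachE (V : VASS k (Option A)) : Prop :=
  ∃ (r : V.Resolver) (f : List A → List (Option A)),
    (∀ u w, u <+: w → f u <+: f w) ∧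
    ∀ w ∈ V.LangReachE, (f w).reduceOption = w ∧
      ∃ c, V.resRun r (f w) = some c ∧ c.1 ∈ V.acc ∧ c.2 = fun _ => 0

end VASS

inductive AB | a | b
deriving DecidableEq

open AB List

/-- The language `a^n b^{≥ n}`. -/
def Lgeq : Set (List AB) :=
  {w | ∃ n m, n ≤ m ∧ w = replicate n a ++ replicate m b}


namespace VASS

variable {k : ℕ} {A : Type}

lemma run_trans {V : VASS k A} {c₀ c₁ c₂ : V.Conf} {u w : List A}
    (h₁ : V.Run c₀ u c₁) (h₂ : V.Run c₁ w c₂) : V.Run c₀ (u ++ w) c₂ := by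
  induction h₁ with
  | nil => exact h₂
  | cons ht hnn _ ih => exact Run.cons ht hnn (ih h₂)

lemma run_split {V : VASS k A} {c₀ c₂ : V.Conf} {u w : List A}
    (h : V.Run c₀ (u ++ w) c₂) : ∃ c₁, V.Run c₀ u c₁ ∧ V.Run c₁ w c₂ := by
  induction u generalizing c₀ with
  | nil => exact ⟨c₀, Run.nil c₀, h⟩
  | cons x u ih =>
    cases h with
    | cons ht hnn hr =>
      obtain ⟨c₁, h1, h2⟩ := ih hr
      exact ⟨c₁, Run.cons ht hnn h1, h2⟩

lemma det_diff {V : VASS k A} (hdet : V.Det) :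
    ∀ (w : List A) (q : Fin V.n) (v v' : Fin k → ℕ) (c c' : V.Conf),
      V.Run (q, v) w c → V.Run (q, v') w c' →
      c.1 = c'.1 ∧ ∀ i, (c.2 i : ℤ) - v i = (c'.2 i : ℤ) - v' i := by
  intro w
  induction w with
  | nil =>
    intro q v v' c c' h h'
    cases h; cases h'
    exact ⟨rfl, fun i => by simp⟩
  | cons x w ih =>
    intro q v v' c c' h h'
    cases h with
    | @cons _ _ _ d q' _ _ ht hnn hr =>
    cases h' with
    | @cons _ _ _ d' q'' _ _ ht' hnn' hr' =>
      obtain ⟨hd, hq⟩ := hdet _ _ _ _ _ _ ht ht'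
      subst hd; subst hq
      obtain ⟨h1, h2⟩ := ih _ _ _ _ _ hr hr'
      refine ⟨h1, fun i => ?_⟩
      have h3 := h2 i
      have e1 := Int.toNat_of_nonneg (hnn i)
      have e2 := Int.toNat_of_nonneg (hnn' i)
      omega

lemma run_det {V : VASS k A} (hdet : V.Det) {c c₁ c₂ : V.Conf} {w : List A}
    (h₁ : V.Run c w c₁) (h₂ : V.Run c w c₂) : c₁ = c₂ := by
  obtain ⟨h1, h2⟩ := det_diff hdet w c.1 c.2 c.2 c₁ c₂ h₁ h₂
  refine Prod.ext h1 (funext fun i => ?_)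
  have := h2 i
  omega

end VASS

open AB List in
lemma not_mem_Lgeq {n n' : ℕ} (h : n < n') :
    (replicate n' AB.a ++ replicate n AB.b) ∉ Lgeq := by
  rintro ⟨p, q, hpq, heq⟩
  have ha := congrArg (List.count AB.a) heq
  have hb := congrArg (List.count AB.b) heq
  have hab : AB.a ≠ AB.b := by decide
  simp [List.count_append, List.count_replicate, hab, hab.symm] at ha hb
  omega

/-- `a^n b^{≥ n}` is not recognised by any deterministic VASS with reachability acceptance. -/
theorem stmt2 : ¬ ∃ (k : ℕ) (V : VASS k AB), V.Det ∧ V.LangReach = Lgeq := by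
  rintro ⟨k, V, hdet, hlang⟩
  have key : ∀ n : ℕ, ∃ cn : V.Conf, V.Run V.initConf (replicate n a) cn ∧
      ∃ q : Fin V.n, q ∈ V.acc ∧ V.Run cn (replicate n b) (q, fun _ => 0) := by
    intro n
    have hmem : replicate n a ++ replicate n b ∈ V.LangReach := by
      rw [hlang]; exact ⟨n, n, le_refl n, rfl⟩
    obtain ⟨c, hrun, hacc, hz⟩ := hmem
    obtain ⟨c₁, h1, h2⟩ := VASS.run_split hrun
    refine ⟨c₁, h1, c.1, hacc, ?_⟩
    have hc : c = (c.1, fun _ => 0) := Prod.ext rfl hz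
    rwa [hc] at h2
  choose cfg hrunA qf hqacc hrunB using key
  have main : ∀ n n' : ℕ, n < n' → (cfg n).1 = (cfg n').1 → False := by
    intro n n' hlt hst
    have hmem : replicate n a ++ replicate n' b ∈ V.LangReach := by
      rw [hlang]; exact ⟨n, n', hlt.le, rfl⟩
    obtain ⟨c, hrun, hacc, hz⟩ := hmem
    obtain ⟨c₁, h1, h2⟩ := VASS.run_split hrun
    have hc₁ : c₁ = cfg n := VASS.run_det hdet h1 (hrunA n)
    subst hc₁
    have h2' : V.Run ((cfg n).1, (cfg n).2) (replicate n' b) (c.1, fun _ => 0) := by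
      have hc : c = (c.1, fun _ => 0) := Prod.ext rfl hz
      rwa [hc] at h2
    have h3 : V.Run ((cfg n).1, (cfg n').2) (replicate n' b) (qf n', fun _ => 0) := by
      rw [hst]; exact hrunB n'
    have heq : cfg n = cfg n' := by
      have hdd := VASS.det_diff hdet (replicate n' b) (cfg n).1 (cfg n).2 (cfg n').2
        (c.1, fun _ => 0) (qf n', fun _ => 0) h2' h3
      refine Prod.ext hst (funext fun i => ?_)
      have hi := hdd.2 i
      simp only at hi
      omega
    have hrun2 : V.Run V.initConf (replicate n' a ++ replicate n b) (qf n, fun _ => 0) :=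
      VASS.run_trans (hrunA n') (heq ▸ hrunB n)
    have hmem2 : replicate n' a ++ replicate n b ∈ V.LangReach :=
      ⟨(qf n, fun _ => 0), hrun2, hqacc n, rfl⟩
    rw [hlang] at hmem2
    exact not_mem_Lgeq hlt hmem2
  obtain ⟨i, j, hij, hstate⟩ :=
    Fintype.exists_ne_map_eq_of_card_lt (fun m : Fin (V.n + 1) => (cfg m.val).1) (by simp)
  rcases lt_or_gt_of_ne (show i.val ≠ j.val from fun h => hij (Fin.ext h)) with h | h
  · exact main _ _ h hstate
  · exact main _ _ h hstate.symm
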